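/- arXiv:2402.05429 — 3 statements merged into one kernel-verified Lean document; each statement's English description precedes it below -/
import Mathlib

section
/- Let n ≥ 1 and let u : B̄₁ⁿ → ℝ be a twice continuously differentiable function on the closed unit ball satisfying the Neumann boundary condition ⟨∇u(x), x⟩ = 1 for every x ∈ ∂B₁ⁿ. Then for every ξ in the open unit ball B₁ⁿ there exists a point x₀ ∈ B₁ⁿ (in the open ball) such that ∇u(x₀) = ξ, |∇u(x₀)| < 1, and the Hessian D²u(x₀) is positive semidefinite. In particular, the image of the gradient map ∇u restricted to the set A = {x ∈ B₁ⁿ : |∇u(x)| < 1 and D²u(x) is positive semidefinite} contains B₁ⁿ. -/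
open MeasureTheory Metric Set Filter
open scoped ENNReal NNReal Topology

noncomputable section

/-- The Hessian matrix `D²u(x)` of a function `u : ℝⁿ → ℝ`, as the Jacobian matrix of the
gradient map. -/
def hessianMatrix {n : ℕ} (u : EuclideanSpace ℝ (Fin n) → ℝ) (x : EuclideanSpace ℝ (Fin n)) :
    Matrix (Fin n) (Fin n) ℝ :=
  Matrix.of fun i j : Fin n =>
    fderiv ℝ (fun y : EuclideanSpace ℝ (Fin n) => gradient u y) x (EuclideanSpace.single j 1) i




lemma aux_deriv_nonneg {f : ℝ → ℝ} {d δ : ℝ} (hδ : 0 < δ)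
    (hmin : ∀ t ∈ Set.Icc (0:ℝ) δ, f 0 ≤ f t) (hf : HasDerivAt f d 0) : 0 ≤ d := by
  have h := hasDerivAt_iff_tendsto_slope.1 hf
  have h' : Tendsto (slope f 0) (𝓝[>] 0) (𝓝 d) :=
    h.mono_left (nhdsWithin_mono _ (fun t ht => ne_of_gt ht))
  refine ge_of_tendsto h' ?_
  filter_upwards [Ioo_mem_nhdsGT_of_mem ⟨le_refl 0, hδ⟩] with t ht
  have h1 : 0 ≤ f t - f 0 := sub_nonneg.2 (hmin t ⟨ht.1.le, ht.2.le⟩)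
  have := div_nonneg h1 ht.1.le
  simpa [slope_def_field] using this

lemma aux_second_nonneg {f g : ℝ → ℝ} {δ q : ℝ} (hδ : 0 < δ)
    (hf : ∀ t ∈ Set.Ioo (-δ) δ, HasDerivAt f (g t) t)
    (hmin : ∀ t ∈ Set.Ioo (-δ) δ, f 0 ≤ f t)
    (hg : HasDerivAt g q 0) : 0 ≤ q := by
  by_contra hq
  push_neg at hq
  have hmem : Set.Ioo (-δ) δ ∈ 𝓝 (0:ℝ) := Ioo_mem_nhds (neg_lt_zero.2 hδ) hδ
  have hloc : IsLocalMin f 0 := Filter.eventually_of_mem hmem hmin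
  have hg0 : g 0 = 0 := hloc.hasDerivAt_eq_zero (hf 0 ⟨neg_lt_zero.2 hδ, hδ⟩)
  have h := hasDerivAt_iff_tendsto_slope.1 hg
  have h' : Tendsto (slope g 0) (𝓝[>] 0) (𝓝 q) :=
    h.mono_left (nhdsWithin_mono _ (fun t ht => ne_of_gt ht))
  have hev : ∀ᶠ t in 𝓝[>] (0:ℝ), slope g 0 t < 0 := h'.eventually (gt_mem_nhds hq)
  rcases mem_nhdsGT_iff_exists_Ioo_subset.1 hev with ⟨ε, (hε : 0 < ε), hsub⟩
  -- g is negative on (0, ε)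
  have hgneg : ∀ t ∈ Ioo (0:ℝ) ε, g t < 0 := by
    intro t ht
    have hs : slope g 0 t < 0 := hsub ht
    rw [slope_def_field, hg0, sub_zero, sub_zero] at hs
    have := mul_neg_of_neg_of_pos hs ht.1
    rwa [div_mul_cancel₀ _ (ne_of_gt ht.1)] at this
  set b := min ε δ / 2 with hb
  have hb0 : 0 < b := by positivity
  have hm : 0 < min ε δ := lt_min hε hδ
  have hbε : b < ε := lt_of_lt_of_le (half_lt_self hm) (min_le_left _ _)
  have hbδ : b < δ := lt_of_lt_of_le (half_lt_self hm) (min_le_right _ _)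
  have hIcc : Icc (0:ℝ) b ⊆ Ioo (-δ) δ := fun t ht =>
    ⟨lt_of_lt_of_le (neg_lt_zero.2 hδ) ht.1, lt_of_le_of_lt ht.2 hbδ⟩
  have hcont : ContinuousOn f (Icc 0 b) := fun t ht =>
    ((hf t (hIcc ht)).continuousAt).continuousWithinAt
  obtain ⟨c, hc, hceq⟩ := exists_hasDerivAt_eq_slope f g hb0 hcont
    (fun t ht => hf t (hIcc ⟨ht.1.le, ht.2.le⟩))
  have hcneg : g c < 0 := hgneg c ⟨hc.1, hc.2.trans hbε⟩
  have hfb : f 0 ≤ f b := hmin b ⟨lt_trans (neg_lt_zero.2 hδ) hb0, hbδ⟩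
  have : 0 ≤ g c := by
    rw [hceq, sub_zero]
    exact div_nonneg (sub_nonneg.2 hfb) hb0.le
  linarith


def dualIso (n : ℕ) :
    StrongDual ℝ (EuclideanSpace ℝ (Fin n)) ≃L[ℝ] EuclideanSpace ℝ (Fin n) :=
  { toFun := fun L => (InnerProductSpace.toDual ℝ (EuclideanSpace ℝ (Fin n))).symm L
    invFun := fun y => InnerProductSpace.toDual ℝ (EuclideanSpace ℝ (Fin n)) y
    map_add' := fun a b => map_add _ a b
    map_smul' := fun c L => by
      have := (InnerProductSpace.toDual ℝ (EuclideanSpace ℝ (Fin n))).symm.map_smulₛₗ c L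
      simpa [starRingEnd_apply] using this
    left_inv := fun L => (InnerProductSpace.toDual ℝ _).apply_symm_apply L
    right_inv := fun y => (InnerProductSpace.toDual ℝ _).symm_apply_apply y
    continuous_toFun := (InnerProductSpace.toDual ℝ _).symm.continuous
    continuous_invFun := (InnerProductSpace.toDual ℝ _).continuous }

lemma inner_dualIso {n : ℕ} (L : StrongDual ℝ (EuclideanSpace ℝ (Fin n)))
    (y : EuclideanSpace ℝ (Fin n)) : (inner ℝ (dualIso n L) y : ℝ) = L y := by
  show (inner ℝ ((InnerProductSpace.toDual ℝ _).symm L) y : ℝ) = L y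
  rw [← InnerProductSpace.toDual_apply_apply, (InnerProductSpace.toDual ℝ _).apply_symm_apply]

lemma euclid_sum_single {n : ℕ} (y : EuclideanSpace ℝ (Fin n)) :
    ∑ i, y i • EuclideanSpace.single i (1:ℝ) = y := by
  classical
  ext k
  have : (∑ i, y i • EuclideanSpace.single i (1:ℝ)) k
      = ∑ i, (y i • EuclideanSpace.single i (1:ℝ)) k := by
      rw [WithLp.ofLp_sum]; exact Finset.sum_apply k Finset.univ _
  rw [this]
  simp [EuclideanSpace.single_apply]

set_option maxHeartbeats 1000000

/-- The touching argument in the ABP proof: if `u` is `C²` on the closed unit ball and satisfies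
the Neumann condition `⟨∇u(x), x⟩ = 1` on `∂B₁ⁿ`, then for every `ξ ∈ B₁ⁿ` there is an interior
point `x₀ ∈ B₁ⁿ` with `∇u(x₀) = ξ`, `|∇u(x₀)| < 1` and `D²u(x₀)` positive semidefinite; in
particular the image of `∇u` restricted to the set
`A = {x ∈ B₁ⁿ : |∇u(x)| < 1, D²u(x) ≥ 0}` contains `B₁ⁿ`. -/
theorem gradient_image_contains_ball (n : ℕ) (hn : 1 ≤ n)
    (u : EuclideanSpace ℝ (Fin n) → ℝ) (V : Set (EuclideanSpace ℝ (Fin n)))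
    (hV : IsOpen V) (hBV : closedBall (0 : EuclideanSpace ℝ (Fin n)) 1 ⊆ V)
    (hu : ContDiffOn ℝ 2 u V)
    (hneumann : ∀ x ∈ sphere (0 : EuclideanSpace ℝ (Fin n)) 1,
      (inner ℝ (gradient u x) x : ℝ) = 1) :
    (∀ ξ ∈ ball (0 : EuclideanSpace ℝ (Fin n)) 1,
      ∃ x₀ ∈ ball (0 : EuclideanSpace ℝ (Fin n)) 1,
        gradient u x₀ = ξ ∧ ‖gradient u x₀‖ < 1 ∧ (hessianMatrix u x₀).PosSemidef) ∧
    ball (0 : EuclideanSpace ℝ (Fin n)) 1 ⊆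
      (fun x => gradient u x) '' {x ∈ ball (0 : EuclideanSpace ℝ (Fin n)) 1 |
        ‖gradient u x‖ < 1 ∧ (hessianMatrix u x).PosSemidef} := by
  classical
  have key : ∀ ξ ∈ ball (0 : EuclideanSpace ℝ (Fin n)) 1,
      ∃ x₀ ∈ ball (0 : EuclideanSpace ℝ (Fin n)) 1,
        gradient u x₀ = ξ ∧ ‖gradient u x₀‖ < 1 ∧ (hessianMatrix u x₀).PosSemidef := by
    intro ξ hξ
    have hξn : ‖ξ‖ < 1 := mem_ball_zero_iff.1 hξ
    set F := fun y : EuclideanSpace ℝ (Fin n) => fderiv ℝ u y with hFdef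
    have huV : ∀ x ∈ V, HasFDerivAt u (F x) x := fun x hx =>
      ((hu.differentiableOn (by norm_num)).differentiableAt (hV.mem_nhds hx)).hasFDerivAt
    have hF1 : ContDiffOn ℝ 1 F V := hu.fderiv_of_isOpen hV (by norm_num)
    have hFd : ∀ x ∈ V, HasFDerivAt F (fderiv ℝ F x) x := fun x hx =>
      ((hF1.differentiableOn (by norm_num)).differentiableAt (hV.mem_nhds hx)).hasFDerivAt
    have hgradF : ∀ x, gradient u x = dualIso n (F x) := fun x => rfl
    have hinner : ∀ y z, (inner ℝ (gradient u y) z : ℝ) = F y z := fun y z => by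
      rw [hgradF]; exact inner_dualIso _ _
    set w := fun y : EuclideanSpace ℝ (Fin n) => u y - (inner ℝ ξ y : ℝ) with hwdef
    have hwd : ∀ y ∈ V, HasFDerivAt w (F y - innerSL ℝ ξ) y := fun y hy =>
      (huV y hy).sub ((innerSL ℝ ξ).hasFDerivAt)
    have hwc : ContinuousOn w (closedBall (0 : EuclideanSpace ℝ (Fin n)) 1) := by
      apply ContinuousOn.sub ((hu.continuousOn).mono hBV)
      exact Continuous.continuousOn (continuous_const.inner continuous_id)
    obtain ⟨x₀, hx₀cb, hmin⟩ :=
      (isCompact_closedBall (0 : EuclideanSpace ℝ (Fin n)) 1).exists_isMinOn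
        ⟨0, mem_closedBall_self zero_le_one⟩ hwc
    have hx₀V : x₀ ∈ V := hBV hx₀cb
    -- x₀ is interior
    have hx₀b : x₀ ∈ ball (0 : EuclideanSpace ℝ (Fin n)) 1 := by
      by_contra hbd
      have hs : ‖x₀‖ = 1 := le_antisymm (mem_closedBall_zero_iff.1 hx₀cb)
        (not_lt.1 (fun h => hbd (mem_ball_zero_iff.2 h)))
      have hsph : x₀ ∈ sphere (0 : EuclideanSpace ℝ (Fin n)) 1 := by
        rwa [mem_sphere_zero_iff_norm]
      set φ := fun t : ℝ => w ((1-t) • x₀) with hφdef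
      have hc : HasDerivAt (fun t : ℝ => (1-t) • x₀) (-x₀) 0 := by
        have h1 : HasDerivAt (fun t : ℝ => 1 - t) (-1) 0 := by
          simpa using (hasDerivAt_id (0:ℝ)).const_sub 1
        simpa using h1.smul_const x₀
      have h0 : (1-(0:ℝ)) • x₀ = x₀ := by simp
      have hφd : HasDerivAt φ ((F x₀ - innerSL ℝ ξ) (-x₀)) 0 := by
        have hw' : HasFDerivAt w (F x₀ - innerSL ℝ ξ) ((1-(0:ℝ)) • x₀) := by
          rw [h0]; exact hwd x₀ hx₀V
        exact hw'.comp_hasDerivAt 0 hc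
      have hminφ : ∀ t ∈ Icc (0:ℝ) 1, φ 0 ≤ φ t := by
        intro t ht
        have hmem : (1-t) • x₀ ∈ closedBall (0 : EuclideanSpace ℝ (Fin n)) 1 := by
          rw [mem_closedBall_zero_iff, norm_smul, hs, mul_one, Real.norm_eq_abs,
            abs_of_nonneg (by linarith [ht.2])]
          linarith [ht.1]
        have := hmin hmem
        simpa [hφdef, h0] using this
      have hd := aux_deriv_nonneg one_pos hminφ hφd
      have hval : (F x₀ - innerSL ℝ ξ) (-x₀) = -(1 - (inner ℝ ξ x₀ : ℝ)) := by
        have hne : F x₀ x₀ = 1 := by rw [← hinner x₀ x₀]; exact hneumann x₀ hsph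
        simp [ContinuousLinearMap.sub_apply, map_neg, innerSL_apply_apply, hne]
      rw [hval] at hd
      have hle : (inner ℝ ξ x₀ : ℝ) ≤ ‖ξ‖ * ‖x₀‖ := real_inner_le_norm ξ x₀
      rw [hs, mul_one] at hle
      linarith
    -- local minimum at interior point
    have hlocmin : IsLocalMin w x₀ :=
      hmin.isLocalMin (Filter.mem_of_superset (isOpen_ball.mem_nhds hx₀b) ball_subset_closedBall)
    have hw0 : F x₀ - innerSL ℝ ξ = 0 := hlocmin.hasFDerivAt_eq_zero (hwd x₀ hx₀V)
    have hFx₀ : F x₀ = innerSL ℝ ξ := by rwa [sub_eq_zero] at hw0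
    have hgx₀ : gradient u x₀ = ξ := by
      apply ext_inner_right ℝ
      intro z
      rw [hinner, hFx₀, innerSL_apply_apply]
    have hnorm : ‖gradient u x₀‖ < 1 := by rw [hgx₀]; exact hξn
    -- Hessian
    set f'' := fderiv ℝ F x₀ with hf''def
    have hsymm : ∀ a b, f'' a b = f'' b a := fun a b =>
      second_derivative_symmetric_of_eventually
        (Filter.eventually_of_mem (hV.mem_nhds hx₀V) (fun y hy => huV y hy)) (hFd x₀ hx₀V) a b
    have hGd : HasFDerivAt (fun y => gradient u y)
        (((dualIso n) : StrongDual ℝ (EuclideanSpace ℝ (Fin n)) →L[ℝ]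
          EuclideanSpace ℝ (Fin n)).comp f'') x₀ :=
      (((dualIso n) : StrongDual ℝ (EuclideanSpace ℝ (Fin n)) →L[ℝ]
          EuclideanSpace ℝ (Fin n)).hasFDerivAt).comp x₀ (hFd x₀ hx₀V)
    have hHess : ∀ i j, hessianMatrix u x₀ i j
        = f'' (EuclideanSpace.single j 1) (EuclideanSpace.single i 1) := by
      intro i j
      show (fderiv ℝ (fun y => gradient u y) x₀ (EuclideanSpace.single j 1)) i = _
      rw [hGd.fderiv]
      have h1 : (inner ℝ (dualIso n (f'' (EuclideanSpace.single j 1)))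
          (EuclideanSpace.single i (1:ℝ)) : ℝ) = f'' (EuclideanSpace.single j 1)
          (EuclideanSpace.single i 1) := inner_dualIso _ _
      rw [EuclideanSpace.inner_single_right] at h1
      simpa using h1
    have hherm : (hessianMatrix u x₀).IsHermitian := by
      show Matrix.conjTranspose (hessianMatrix u x₀) = hessianMatrix u x₀
      ext i j
      rw [Matrix.conjTranspose_apply, hHess, hHess, star_trivial]
      exact hsymm _ _
    have hexp : ∀ y z : EuclideanSpace ℝ (Fin n), f'' y z
        = ∑ j, ∑ i, y j * z i * f'' (EuclideanSpace.single j 1) (EuclideanSpace.single i 1) := by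
      intro y z
      conv_lhs => rw [← euclid_sum_single y, ← euclid_sum_single z]
      rw [_root_.map_sum, Finset.sum_comm]
      refine Finset.sum_congr rfl fun i _ => ?_
      rw [_root_.map_smul, smul_eq_mul, _root_.map_sum, ContinuousLinearMap.sum_apply, Finset.mul_sum]
      refine Finset.sum_congr rfl fun j _ => ?_
      rw [_root_.map_smul, ContinuousLinearMap.smul_apply, smul_eq_mul]
      ring
    have hq : ∀ v' : EuclideanSpace ℝ (Fin n), 0 ≤ f'' v' v' := by
      intro v'
      set δ := (1 - ‖x₀‖) / (‖v'‖ + 1) with hδdef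
      have hx₀n : ‖x₀‖ < 1 := mem_ball_zero_iff.1 hx₀b
      have hδ : 0 < δ := div_pos (by linarith) (by positivity)
      set γ := fun t : ℝ => x₀ + t • v' with hγdef
      have hγ0 : γ 0 = x₀ := by simp [hγdef]
      have hγball : ∀ t ∈ Ioo (-δ) δ, γ t ∈ ball (0 : EuclideanSpace ℝ (Fin n)) 1 := by
        intro t ht
        rw [mem_ball_zero_iff]
        have habs : |t| < δ := abs_lt.2 ht
        calc ‖x₀ + t • v'‖ ≤ ‖x₀‖ + ‖t • v'‖ := norm_add_le _ _
          _ = ‖x₀‖ + |t| * ‖v'‖ := by rw [norm_smul, Real.norm_eq_abs]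
          _ < ‖x₀‖ + δ * (‖v'‖ + 1) := by nlinarith [norm_nonneg v', abs_nonneg t]
          _ = 1 := by rw [hδdef]; field_simp; ring
      have hγV : ∀ t ∈ Ioo (-δ) δ, γ t ∈ V := fun t ht =>
        hBV (ball_subset_closedBall (hγball t ht))
      have hγd : ∀ t : ℝ, HasDerivAt γ v' t := fun t => by
        have := ((hasDerivAt_id t).smul_const v').const_add x₀; rw [one_smul] at this; exact this
      set ψ := fun t : ℝ => w (γ t) with hψdef
      set g := fun t : ℝ => F (γ t) v' - (inner ℝ ξ v' : ℝ) with hgdef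
      have hψd : ∀ t ∈ Ioo (-δ) δ, HasDerivAt ψ (g t) t := by
        intro t ht
        have := (hwd (γ t) (hγV t ht)).comp_hasDerivAt t (hγd t)
        simp only [ContinuousLinearMap.sub_apply, innerSL_apply_apply] at this; exact this
      have hminψ : ∀ t ∈ Ioo (-δ) δ, ψ 0 ≤ ψ t := by
        intro t ht
        have := hmin (ball_subset_closedBall (hγball t ht))
        simpa [hψdef, hγ0] using this
      have hgd : HasDerivAt g (f'' v' v') 0 := by
        have hFc : HasDerivAt (fun t => F (γ t)) (f'' v') 0 := by
          have hF' : HasFDerivAt F f'' (γ 0) := by rw [hγ0]; exact hFd x₀ hx₀V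
          exact hF'.comp_hasDerivAt 0 (hγd 0)
        have := hFc.clm_apply (hasDerivAt_const 0 v')
        exact (this.sub_const _).congr_deriv (by simp)
      exact aux_second_nonneg hδ hψd hminψ hgd
    -- assemble PosSemidef
    have hpsd : (hessianMatrix u x₀).PosSemidef := by
      refine Matrix.posSemidef_iff_dotProduct_mulVec.2 ⟨hherm, fun v => ?_⟩
      have h0 := hq ((WithLp.equiv 2 (Fin n → ℝ)).symm v)
      rw [hexp] at h0
      have hv' : ∀ k, ((WithLp.equiv 2 (Fin n → ℝ)).symm v) k = v k := fun k => rfl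
      show 0 ≤ dotProduct (star v) ((hessianMatrix u x₀).mulVec v)
      have : dotProduct (star v) ((hessianMatrix u x₀).mulVec v)
          = ∑ j, ∑ i, ((WithLp.equiv 2 (Fin n → ℝ)).symm v) j
            * ((WithLp.equiv 2 (Fin n → ℝ)).symm v) i
            * f'' (EuclideanSpace.single j 1) (EuclideanSpace.single i 1) := by
        simp only [dotProduct, Matrix.mulVec, Pi.star_apply, star_trivial, hHess, hv',
          Finset.mul_sum]
        rw [Finset.sum_comm]
        refine Finset.sum_congr rfl fun j _ => Finset.sum_congr rfl fun i _ => ?_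
        ring
      rw [this]
      exact h0
    exact ⟨x₀, hx₀b, hgx₀, hnorm, hpsd⟩
  refine ⟨key, ?_⟩
  intro ξ hξ
  obtain ⟨x₀, hx₀, h1, h2, h3⟩ := key ξ hξ
  exact ⟨x₀, ⟨hx₀, h2, h3⟩, h1⟩
end
end

section
/- Let n ≥ 2, let f be a positive smooth function on the closed unit ball B̄₁ⁿ ⊂ ℝⁿ, and let u : B̄₁ⁿ → ℝ be a twice continuously differentiable function satisfying div(f·∇u)(x) = n·f(x)^{n/(n-1)} − |∇f(x)| for all x ∈ B̄₁ⁿ and ⟨∇u(x), x⟩ = 1 for all x ∈ ∂B₁ⁿ. Then ∫_{B₁ⁿ} f^{n/(n-1)} dx ≥ |B₁ⁿ|. -/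
open MeasureTheory Metric Set Filter
open scoped ENNReal NNReal Topology

noncomputable section

/-- The (Euclidean) divergence of a vector field `V : ℝⁿ → ℝⁿ`. -/
def divergence {n : ℕ} (V : EuclideanSpace ℝ (Fin n) → EuclideanSpace ℝ (Fin n))
    (x : EuclideanSpace ℝ (Fin n)) : ℝ :=
  ∑ i : Fin n, fderiv ℝ V x (EuclideanSpace.single i 1) i


open InnerProductSpace Matrix

section Aux


lemma trace_eq_sum_eigenvalues {n : ℕ} {A : Matrix (Fin n) (Fin n) ℝ} (hA : A.IsHermitian) :
    A.trace = ∑ i, hA.eigenvalues i := by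
  simpa using hA.trace_eq_sum_eigenvalues

lemma psd_det_le_pow_trace {n : ℕ} (hn : 0 < n) {A : Matrix (Fin n) (Fin n) ℝ}
    (hA : A.PosSemidef) : A.det ≤ (A.trace / n) ^ n := by
  have hherm := hA.1
  have hev : ∀ i, 0 ≤ hherm.eigenvalues i := hA.eigenvalues_nonneg
  have hdet : A.det = ∏ i, hherm.eigenvalues i := by
    simpa using hherm.det_eq_prod_eigenvalues
  have htr : A.trace = ∑ i, hherm.eigenvalues i := trace_eq_sum_eigenvalues hherm
  have amgm : ∏ i, (hherm.eigenvalues i) ^ ((n : ℝ)⁻¹) ≤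
      ∑ i : Fin n, (n : ℝ)⁻¹ * hherm.eigenvalues i := by
    apply Real.geom_mean_le_arith_mean_weighted
    · intro i _; positivity
    · simp [Finset.sum_const, Finset.card_univ]
      field_simp
    · intro i _; exact hev i
  have h1 : ∑ i : Fin n, (n : ℝ)⁻¹ * hherm.eigenvalues i = A.trace / n := by
    rw [htr, ← Finset.mul_sum]; ring
  have h2 : (∏ i, (hherm.eigenvalues i) ^ ((n : ℝ)⁻¹)) ^ n = ∏ i, hherm.eigenvalues i := by
    rw [← Finset.prod_pow]
    apply Finset.prod_congr rfl
    intro i _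
    rw [← Real.rpow_natCast ((hherm.eigenvalues i) ^ ((n : ℝ)⁻¹)) n,
      ← Real.rpow_mul (hev i)]
    rw [inv_mul_cancel₀ (by positivity : (n:ℝ) ≠ 0), Real.rpow_one]
  calc A.det = (∏ i, (hherm.eigenvalues i) ^ ((n : ℝ)⁻¹)) ^ n := by rw [hdet, h2]
    _ ≤ (∑ i : Fin n, (n : ℝ)⁻¹ * hherm.eigenvalues i) ^ n := by
        exact pow_le_pow_left₀ (Finset.prod_nonneg fun i _ => Real.rpow_nonneg (hev i) _) amgm n
    _ = (A.trace / n) ^ n := by rw [h1]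


lemma hasDerivAt_nonneg_of_isMinOn_right {φ : ℝ → ℝ} {c δ : ℝ} (hδ : 0 < δ)
    (hφ : HasDerivAt φ c 0) (hmin : ∀ t ∈ Ico (0:ℝ) δ, φ 0 ≤ φ t) : 0 ≤ c := by
  have hslope := hφ.hasDerivWithinAt (s := Ioi (0:ℝ))
  have htend := (hasDerivWithinAt_iff_tendsto_slope).mp hslope
  have hmem : Ioi (0:ℝ) \ {0} = Ioi 0 := by simp
  rw [hmem] at htend
  refine ge_of_tendsto htend ?_
  filter_upwards [Ioo_mem_nhdsGT_of_mem (Set.left_mem_Ico.2 hδ)] with t ht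
  have h1 : 0 < t := ht.1
  have h2 : φ 0 ≤ φ t := hmin t ⟨le_of_lt h1, ht.2⟩
  rw [slope_def_field]
  rw [sub_zero]
  exact div_nonneg (by linarith) (le_of_lt h1)

lemma second_deriv_nonneg_of_isMinOn {φ φ' : ℝ → ℝ} {c δ : ℝ} (hδ : 0 < δ)
    (hφ : ∀ t ∈ Ioo (-δ) δ, HasDerivAt φ (φ' t) t)
    (hφ' : HasDerivAt φ' c 0) (h0 : φ' 0 = 0)
    (hmin : ∀ t ∈ Ioo (-δ) δ, φ 0 ≤ φ t) : 0 ≤ c := by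
  by_contra hc
  push_neg at hc
  have hslope := (hφ'.hasDerivWithinAt (s := Ioi (0:ℝ)))
  have htend := (hasDerivWithinAt_iff_tendsto_slope).mp hslope
  have hmem : Ioi (0:ℝ) \ {0} = Ioi 0 := by simp
  rw [hmem] at htend
  have hev : ∀ᶠ t in 𝓝[>] (0:ℝ), slope φ' 0 t < 0 :=
    htend.eventually_lt_const hc
  have hev' : ∀ᶠ t in 𝓝[>] (0:ℝ), φ' t < 0 := by
    filter_upwards [hev, self_mem_nhdsWithin] with t ht ht'
    rw [Set.mem_Ioi] at ht'
    rw [slope_def_field, h0, sub_zero, sub_zero] at ht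
    by_contra h
    push_neg at h
    exact absurd ht (not_lt.2 (div_nonneg h (le_of_lt ht')))
  obtain ⟨ε, hε, hε'⟩ := (nhdsGT_basis (0:ℝ)).eventually_iff.mp hev'
  set ε' := min (ε/2) (δ/2) with hε'def
  have hε'pos : 0 < ε' := lt_min (by linarith) (by linarith)
  have hε'le : ε' ≤ δ/2 := min_le_right _ _
  have hε'le2 : ε' ≤ ε/2 := min_le_left _ _
  have hsub : Icc (0:ℝ) ε' ⊆ Ioo (-δ) δ := by
    intro t ht
    obtain ⟨h1, h2⟩ := ht
    exact ⟨by linarith, by linarith⟩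
  have hanti : StrictAntiOn φ (Icc (0:ℝ) ε') := by
    apply strictAntiOn_of_deriv_neg (convex_Icc _ _)
    · exact fun t ht => (hφ t (hsub ht)).continuousAt.continuousWithinAt
    · intro t ht
      rw [interior_Icc] at ht
      rw [(hφ t (hsub ⟨le_of_lt ht.1, le_of_lt ht.2⟩)).deriv]
      exact hε' ⟨ht.1, by linarith [ht.2]⟩
  have h1 : φ ε' < φ 0 :=
    hanti (Set.left_mem_Icc.2 (le_of_lt hε'pos)) (Set.right_mem_Icc.2 (le_of_lt hε'pos)) hε'pos
  have h2 := hmin ε' (hsub (Set.right_mem_Icc.2 (le_of_lt hε'pos)))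
  linarith


variable {n : ℕ}

local notation "E" => EuclideanSpace ℝ (Fin n)

lemma inner_gradient_eq (g : E → ℝ) (x v : E) :
    (inner ℝ (gradient g x) v : ℝ) = fderiv ℝ g x v := by
  rw [gradient]
  exact toDual_symm_apply

lemma gradient_eq_comp (u : E → ℝ) :
    gradient u = (toDual ℝ E).symm ∘ (fderiv ℝ u) := rfl

lemma inner_fderiv_gradient (u : E → ℝ) (x v w : E) :
    (inner ℝ (fderiv ℝ (gradient u) x v) w : ℝ) = fderiv ℝ (fderiv ℝ u) x v w := by
  rw [gradient_eq_comp, LinearIsometryEquiv.comp_fderiv]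
  simp only [ContinuousLinearMap.coe_comp', Function.comp_apply,
    LinearIsometryEquiv.coe_coe'']
  exact toDual_symm_apply

/-- Symmetry of the Hessian for a function that is `C²` on an open set. -/
lemma hessian_symm {u : E → ℝ} {V : Set E} (hV : IsOpen V) (hu : ContDiffOn ℝ 2 u V)
    {x : E} (hx : x ∈ V) (v w : E) :
    (inner ℝ (fderiv ℝ (gradient u) x v) w : ℝ) = (inner ℝ (fderiv ℝ (gradient u) x w) v : ℝ) := by
  rw [inner_fderiv_gradient, inner_fderiv_gradient]
  have hev : ∀ᶠ y in 𝓝 x, HasFDerivAt u (fderiv ℝ u y) y := by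
    filter_upwards [hV.mem_nhds hx] with y hy
    exact ((hu.contDiffAt (hV.mem_nhds hy)).differentiableAt (by norm_num)).hasFDerivAt
  have hd : HasFDerivAt (fderiv ℝ u) (fderiv ℝ (fderiv ℝ u) x) x := by
    have h2 : ContDiffAt ℝ 2 u x := hu.contDiffAt (hV.mem_nhds hx)
    have := (h2.fderiv_right (m := 1) (by norm_num)).differentiableAt (by norm_num)
    exact this.hasFDerivAt
  exact second_derivative_symmetric_of_eventually hev hd v w




lemma hessianMatrix_det (u : E → ℝ) (x : E) :
    (hessianMatrix u x).det = (fderiv ℝ (gradient u) x).det := by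
  have : hessianMatrix u x = LinearMap.toMatrix (EuclideanSpace.basisFun (Fin n) ℝ).toBasis
      (EuclideanSpace.basisFun (Fin n) ℝ).toBasis
      ((fderiv ℝ (gradient u) x : E →L[ℝ] E) : E →ₗ[ℝ] E) := by
    ext i j
    rw [LinearMap.toMatrix_apply]
    simp [hessianMatrix, EuclideanSpace.basisFun_apply, EuclideanSpace.basisFun_repr]
  rw [this]
  exact LinearMap.det_toMatrix _ _

lemma mulVec_hessianMatrix (u : E → ℝ) (x : E) (w : E) :
    (hessianMatrix u x) *ᵥ (w : Fin n → ℝ) = fderiv ℝ (gradient u) x w := by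
  funext i
  have hw : w = ∑ j, w j • EuclideanSpace.single j 1 := by
    have := (EuclideanSpace.basisFun (Fin n) ℝ).sum_repr w
    simpa [EuclideanSpace.basisFun_apply, EuclideanSpace.basisFun_repr] using this.symm
  conv_rhs => rw [hw]
  rw [map_sum]
  have hsum : ∀ (F : Fin n → EuclideanSpace ℝ (Fin n)) (i : Fin n),
      (∑ j, F j) i = ∑ j, F j i := fun F i => by rw [WithLp.ofLp_sum]; exact Finset.sum_apply i Finset.univ _
  rw [hsum]
  simp only [Matrix.mulVec, dotProduct, hessianMatrix, Matrix.of_apply]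
  refine Finset.sum_congr rfl fun j _ => ?_
  rw [_root_.map_smul]
  simp [mul_comm]

lemma trace_hessianMatrix (u : E → ℝ) (x : E) :
    (hessianMatrix u x).trace =
      ∑ i, fderiv ℝ (gradient u) x (EuclideanSpace.single i 1) i := by
  simp [Matrix.trace, Matrix.diag, hessianMatrix]

lemma divergence_smul_eq {f : E → ℝ} {g : E → E} {x : E}
    (hf : DifferentiableAt ℝ f x) (hg : DifferentiableAt ℝ g x) :
    divergence (fun y => f y • g y) x =
      (inner ℝ (gradient f x) (g x) : ℝ) + f x * ∑ i, fderiv ℝ g x (EuclideanSpace.single i 1) i := by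
  have h := (hf.hasFDerivAt.smul hg.hasFDerivAt).fderiv
  rw [divergence]
  have heval : ∀ i : Fin n,
      fderiv ℝ (fun y => f y • g y) x (EuclideanSpace.single i 1) i =
        f x * fderiv ℝ g x (EuclideanSpace.single i 1) i +
          fderiv ℝ f x (EuclideanSpace.single i 1) * g x i := by
    intro i
    rw [show (fun y => f y • g y) = f • g from rfl, h]
    simp [ContinuousLinearMap.smulRight_apply, mul_comm]
  rw [Finset.sum_congr rfl fun i _ => heval i, Finset.sum_add_distrib, ← Finset.mul_sum]
  have hinner : (inner ℝ (gradient f x) (g x) : ℝ) =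
      ∑ i, fderiv ℝ f x (EuclideanSpace.single i 1) * g x i := by
    have : ∀ i : Fin n, fderiv ℝ f x (EuclideanSpace.single i 1) = gradient f x i := by
      intro i
      rw [← inner_gradient_eq]
      rw [EuclideanSpace.inner_single_right]
      simp
    rw [Finset.sum_congr rfl fun i _ => by rw [this i]]
    rw [PiLp.inner_apply]
    simp [mul_comm]
  rw [hinner]
  ring

lemma apply_eq_inner_single (y : E) (i : Fin n) :
    y i = (inner ℝ y (EuclideanSpace.single i 1) : ℝ) := by
  simp [EuclideanSpace.inner_single_right]

lemma hessianMatrix_posSemidef {u : E → ℝ} {x : E}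
    (hsym : ∀ v w : E, (inner ℝ (fderiv ℝ (gradient u) x v) w : ℝ) =
      (inner ℝ (fderiv ℝ (gradient u) x w) v : ℝ))
    (hpsd : ∀ w : E, 0 ≤ (inner ℝ (fderiv ℝ (gradient u) x w) w : ℝ)) :
    (hessianMatrix u x).PosSemidef := by
  rw [Matrix.posSemidef_iff_dotProduct_mulVec]
  constructor
  · ext i j
    simp only [Matrix.conjTranspose_apply, star_trivial]
    show (hessianMatrix u x) j i = (hessianMatrix u x) i j
    simp only [hessianMatrix, Matrix.of_apply]
    rw [apply_eq_inner_single ((fderiv ℝ (fun y => gradient u y) x) (EuclideanSpace.single i 1)) j,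
      apply_eq_inner_single ((fderiv ℝ (fun y => gradient u y) x) (EuclideanSpace.single j 1)) i]
    exact hsym _ _
  · intro v
    set w : EuclideanSpace ℝ (Fin n) := WithLp.toLp 2 v with hwdef
    have hmv : (hessianMatrix u x) *ᵥ v = fderiv ℝ (gradient u) x w :=
      mulVec_hessianMatrix u x w
    rw [hmv]
    have : dotProduct (star v) (fderiv ℝ (gradient u) x w : Fin n → ℝ) =
        (inner ℝ (fderiv ℝ (gradient u) x w) w : ℝ) := by
      simp [dotProduct, PiLp.inner_apply, mul_comm, hwdef]
    rw [this]
    exact hpsd w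

lemma hessianMatrix_trace_nonneg_det_le {u : E → ℝ} {x : E}
    (hpsd : (hessianMatrix u x).PosSemidef) :
    0 ≤ (hessianMatrix u x).trace ∧ 0 ≤ (hessianMatrix u x).det := by
  have hherm := hpsd.1
  have hev : ∀ i, 0 ≤ hherm.eigenvalues i := hpsd.eigenvalues_nonneg
  constructor
  · have : (hessianMatrix u x).trace = ∑ i, hherm.eigenvalues i := by
      simpa using hherm.trace_eq_sum_eigenvalues
    rw [this]
    exact Finset.sum_nonneg fun i _ => hev i
  · have : (hessianMatrix u x).det = ∏ i, hherm.eigenvalues i := by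
      simpa using hherm.det_eq_prod_eigenvalues
    rw [this]
    exact Finset.prod_nonneg fun i _ => hev i

end Aux

section Cover

variable {n : ℕ}

local notation "E" => EuclideanSpace ℝ (Fin n)

lemma gradient_contDiffOn {u : E → ℝ} {V : Set E} (hV : IsOpen V)
    (hu : ContDiffOn ℝ 2 u V) : ContDiffOn ℝ 1 (gradient u) V := by
  have h1 : ContDiffOn ℝ 1 (fderiv ℝ u) V := hu.fderiv_of_isOpen hV (by norm_num)
  have h2 : ContDiff ℝ 1 ((toDual ℝ E).symm : (E →L[ℝ] ℝ) → E) :=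
    (toDual ℝ E).symm.toContinuousLinearEquiv.toContinuousLinearMap.contDiff
  exact h2.comp_contDiffOn h1

lemma exists_contact_point {u : E → ℝ} {V : Set E} (hV : IsOpen V)
    (hBV : closedBall (0 : E) 1 ⊆ V) (hu : ContDiffOn ℝ 2 u V)
    (hneumann : ∀ x ∈ sphere (0:E) 1, (inner ℝ (gradient u x) x : ℝ) = 1)
    {p : E} (hp : p ∈ ball (0:E) 1) :
    ∃ x ∈ ball (0:E) 1, gradient u x = p ∧
      ∀ w : E, 0 ≤ (inner ℝ (fderiv ℝ (gradient u) x w) w : ℝ) := by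
  have hud : ∀ y ∈ V, DifferentiableAt ℝ u y := fun y hy =>
    (hu.contDiffAt (hV.mem_nhds hy)).differentiableAt (by norm_num)
  have hgC1 : ContDiffOn ℝ 1 (gradient u) V := gradient_contDiffOn hV hu
  have hgd : ∀ y ∈ V, DifferentiableAt ℝ (gradient u) y := fun y hy =>
    (hgC1.contDiffAt (hV.mem_nhds hy)).differentiableAt one_ne_zero
  set v : E → ℝ := fun y => u y - inner ℝ p y with hvdef
  have hvd : ∀ y ∈ V, DifferentiableAt ℝ v y := fun y hy =>
    (hud y hy).sub (innerSL ℝ p).differentiableAt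
  have hvc : ContinuousOn v (closedBall (0:E) 1) :=
    ((hu.continuousOn.mono hBV).sub ((innerSL ℝ p).continuous.continuousOn))
  obtain ⟨x, hxK, hmin⟩ := (isCompact_closedBall (0:E) 1).exists_isMinOn
    ⟨0, by simp⟩ hvc
  have hfv : ∀ y ∈ V, fderiv ℝ v y = fderiv ℝ u y - innerSL ℝ p := by
    intro y hy
    have heq : fderiv ℝ (fun z => u z - (innerSL ℝ p) z) y = fderiv ℝ u y - innerSL ℝ p := by
      rw [fderiv_fun_sub (hud y hy) (innerSL ℝ p).differentiableAt, (innerSL ℝ p).fderiv]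
    exact heq
  have hfvapp : ∀ y ∈ V, ∀ w : E,
      fderiv ℝ v y w = (inner ℝ (gradient u y) w : ℝ) - (inner ℝ p w : ℝ) := by
    intro y hy w
    rw [hfv y hy]
    simp only [ContinuousLinearMap.coe_sub', Pi.sub_apply, innerSL_apply_apply]
    rw [inner_gradient_eq]
  -- x is interior
  have hxball : x ∈ ball (0:E) 1 := by
    rcases lt_or_eq_of_le (mem_closedBall.mp hxK) with h | h
    · exact mem_ball.mpr h
    · exfalso
      have hxS : x ∈ sphere (0:E) 1 := by
        simpa [mem_sphere, dist_eq_norm] using h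
      have hxV : x ∈ V := hBV hxK
      have hcurve : HasDerivAt (fun t : ℝ => (1 - t) • x) ((-1 : ℝ) • x) 0 :=
        ((hasDerivAt_id (0:ℝ)).const_sub 1).smul_const x
      have hψ : HasDerivAt (fun t : ℝ => v ((1 - t) • x)) (fderiv ℝ v x ((-1 : ℝ) • x)) 0 := by
        have hvx : HasFDerivAt v (fderiv ℝ v x) ((1 - (0:ℝ)) • x) := by
          rw [show (1 - (0:ℝ)) • x = x by simp]
          exact (hvd x hxV).hasFDerivAt
        exact hvx.comp_hasDerivAt 0 hcurve
      have hmin' : ∀ t ∈ Set.Ico (0:ℝ) 1, v ((1 - (0:ℝ)) • x) ≤ v ((1 - t) • x) := by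
        intro t ht
        rw [show (1 - (0:ℝ)) • x = x by simp]
        apply hmin
        rw [mem_closedBall, dist_zero_right, norm_smul]
        have : ‖x‖ = 1 := by simpa [dist_eq_norm] using h
        rw [this, mul_one]
        rw [Real.norm_eq_abs, abs_of_nonneg (by linarith [ht.2])]
        linarith [ht.1]
      have hder := hasDerivAt_nonneg_of_isMinOn_right one_pos hψ hmin'
      have hcomp : fderiv ℝ v x ((-1 : ℝ) • x) = -(1 - (inner ℝ p x : ℝ)) := by
        rw [_root_.map_smul]
        rw [hfvapp x hxV x]
        rw [hneumann x hxS]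
        simp
      rw [hcomp] at hder
      have hpx : (inner ℝ p x : ℝ) < 1 := by
        calc (inner ℝ p x : ℝ) ≤ ‖p‖ * ‖x‖ := real_inner_le_norm p x
          _ < 1 := by
            have hx1 : ‖x‖ = 1 := by simpa [dist_eq_norm] using h
            have hp1 : ‖p‖ < 1 := by simpa [mem_ball, dist_zero_right] using hp
            rw [hx1, mul_one]; exact hp1
      linarith
  have hxV : x ∈ V := hBV hxK
  -- local min, gradient = p
  have hloc : IsLocalMin v x :=
    hmin.isLocalMin (Filter.mem_of_superset (isOpen_ball.mem_nhds hxball) ball_subset_closedBall)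
  have hgradx : gradient u x = p := by
    have h0 : fderiv ℝ v x = 0 := hloc.fderiv_eq_zero
    apply ext_inner_right ℝ
    intro w
    have := hfvapp x hxV w
    rw [h0] at this
    simp only [ContinuousLinearMap.zero_apply] at this
    linarith [this]
  refine ⟨x, hxball, hgradx, ?_⟩
  -- second order condition
  intro w
  obtain ⟨δ', hδ'pos, hδ'sub⟩ := Metric.isOpen_iff.mp (hV.inter isOpen_ball) x ⟨hxV, hxball⟩
  set δ : ℝ := δ' / (‖w‖ + 1) with hδdef
  have hδpos : 0 < δ := div_pos hδ'pos (by positivity)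
  set ℓ : ℝ → E := fun t => x + t • w with hℓdef
  have hℓ0 : ℓ 0 = x := by simp [hℓdef]
  have hℓmem : ∀ t ∈ Set.Ioo (-δ) δ, ℓ t ∈ V ∩ ball (0:E) 1 := by
    intro t ht
    apply hδ'sub
    rw [mem_ball, hℓdef]
    have hdist : dist (x + t • w) x = ‖t • w‖ := by
      rw [dist_eq_norm]; congr 1; abel
    rw [hdist, norm_smul, Real.norm_eq_abs]
    have habs : |t| < δ := abs_lt.mpr ⟨ht.1, ht.2⟩
    calc |t| * ‖w‖ ≤ |t| * (‖w‖ + 1) := by nlinarith [abs_nonneg t, norm_nonneg w]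
      _ < δ * (‖w‖ + 1) := by
          apply mul_lt_mul_of_pos_right habs (by positivity)
      _ = δ' := by rw [hδdef]; field_simp
  have hlineAt : ∀ t : ℝ, HasDerivAt ℓ w t := by
    intro t
    have : HasDerivAt (fun s : ℝ => s • w) ((1:ℝ) • w) t := (hasDerivAt_id t).smul_const w
    simpa [hℓdef] using this.const_add x
  set φ : ℝ → ℝ := fun t => v (ℓ t) with hφdef
  set φ' : ℝ → ℝ := fun t => (inner ℝ (gradient u (ℓ t)) w : ℝ) - (inner ℝ p w : ℝ) with hφ'def
  have hφ : ∀ t ∈ Set.Ioo (-δ) δ, HasDerivAt φ (φ' t) t := by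
    intro t ht
    have hmem := hℓmem t ht
    have hvt : HasFDerivAt v (fderiv ℝ v (ℓ t)) (ℓ t) := (hvd _ hmem.1).hasFDerivAt
    have := hvt.comp_hasDerivAt t (hlineAt t)
    have heq : fderiv ℝ v (ℓ t) w = φ' t := hfvapp _ hmem.1 w
    rw [heq] at this
    exact this
  have hφ'0 : HasDerivAt φ' (inner ℝ (fderiv ℝ (gradient u) x w) w : ℝ) 0 := by
    have hgx : HasFDerivAt (gradient u) (fderiv ℝ (gradient u) x) (ℓ 0) := by
      rw [hℓ0]; exact (hgd x hxV).hasFDerivAt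
    have hcomp : HasDerivAt (fun t => gradient u (ℓ t)) (fderiv ℝ (gradient u) x w) 0 :=
      hgx.comp_hasDerivAt 0 (hlineAt 0)
    have hinner : HasDerivAt (fun t => (inner ℝ (gradient u (ℓ t)) w : ℝ))
        ((inner ℝ (fderiv ℝ (gradient u) x w) w : ℝ)) 0 := by
      have h1 : HasDerivAt (fun t => (innerSL ℝ w) (gradient u (ℓ t)))
          ((innerSL ℝ w) (fderiv ℝ (gradient u) x w)) 0 :=
        (innerSL ℝ w).hasFDerivAt.comp_hasDerivAt 0 hcomp
      have h2 : ∀ y : E, (innerSL ℝ w) y = (inner ℝ y w : ℝ) := fun y => by rw [innerSL_apply_apply]; exact real_inner_comm y w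
      simp only [h2] at h1
      exact h1
    simpa [hφ'def] using hinner.sub_const (inner ℝ p w)
  have h0 : φ' 0 = 0 := by
    rw [hφ'def]; simp only [hℓ0, hgradx, sub_self]
  have hminφ : ∀ t ∈ Set.Ioo (-δ) δ, φ 0 ≤ φ t := by
    intro t ht
    rw [hφdef]
    simp only [hℓ0]
    exact hmin (ball_subset_closedBall (hℓmem t ht).2)
  exact second_deriv_nonneg_of_isMinOn hδpos hφ hφ'0 h0 hminφ

end Cover

/-- The conclusion of the ABP argument: if `u` is `C²` on the closed unit ball, solves
`div(f ∇u) = n f^(n/(n-1)) − |∇f|` on `B̄₁ⁿ` and satisfies the Neumann condition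
`⟨∇u(x), x⟩ = 1` on `∂B₁ⁿ`, then `∫_{B₁ⁿ} f^(n/(n-1)) ≥ |B₁ⁿ|`. -/
theorem abp_lower_bound (n : ℕ) (hn : 2 ≤ n)
    (f : EuclideanSpace ℝ (Fin n) → ℝ) (U : Set (EuclideanSpace ℝ (Fin n)))
    (hU : IsOpen U) (hBU : closedBall (0 : EuclideanSpace ℝ (Fin n)) 1 ⊆ U)
    (hf : ContDiffOn ℝ (⊤ : ℕ∞) f U) (hfpos : ∀ x ∈ U, 0 < f x)
    (u : EuclideanSpace ℝ (Fin n) → ℝ) (V : Set (EuclideanSpace ℝ (Fin n)))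
    (hV : IsOpen V) (hBV : closedBall (0 : EuclideanSpace ℝ (Fin n)) 1 ⊆ V)
    (hu : ContDiffOn ℝ 2 u V)
    (hpde : ∀ x ∈ closedBall (0 : EuclideanSpace ℝ (Fin n)) 1,
      divergence (fun y : EuclideanSpace ℝ (Fin n) => f y • gradient u y) x =
        (n : ℝ) * f x ^ ((n : ℝ) / ((n : ℝ) - 1)) - ‖gradient f x‖)
    (hneumann : ∀ x ∈ sphere (0 : EuclideanSpace ℝ (Fin n)) 1,
      (inner ℝ (gradient u x) x : ℝ) = 1) :
    (∫ x in ball (0 : EuclideanSpace ℝ (Fin n)) 1, f x ^ ((n : ℝ) / ((n : ℝ) - 1))) ≥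
      (volume (ball (0 : EuclideanSpace ℝ (Fin n)) 1)).toReal := by
  classical
  haveI : Nontrivial (EuclideanSpace ℝ (Fin n)) := by
    have hfr : 0 < Module.finrank ℝ (EuclideanSpace ℝ (Fin n)) := by
      rw [finrank_euclideanSpace_fin]; omega
    exact Module.nontrivial_of_finrank_pos hfr
  set K : Set (EuclideanSpace ℝ (Fin n)) := closedBall 0 1 with hKdef
  set B : Set (EuclideanSpace ℝ (Fin n)) := ball 0 1 with hBdef
  set p : ℝ := (n : ℝ) / ((n : ℝ) - 1) with hpdef
  have hn2 : (2:ℝ) ≤ (n:ℝ) := by exact_mod_cast hn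
  have hnpos : (0:ℝ) < n := by linarith
  have hn1ne : (n:ℝ) - 1 ≠ 0 := by linarith
  have hn0 : 0 < n := by omega
  -- regularity
  have hud : ∀ y ∈ V, DifferentiableAt ℝ u y := fun y hy =>
    (hu.contDiffAt (hV.mem_nhds hy)).differentiableAt (by norm_num)
  have hgC1 : ContDiffOn ℝ 1 (gradient u) V := gradient_contDiffOn hV hu
  have hgd : ∀ y ∈ V, DifferentiableAt ℝ (gradient u) y := fun y hy =>
    (hgC1.contDiffAt (hV.mem_nhds hy)).differentiableAt one_ne_zero
  have hHcont : ContinuousOn (fun y => fderiv ℝ (gradient u) y) V :=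
    hgC1.continuousOn_fderiv_of_isOpen hV le_rfl
  have hfd : ∀ y ∈ U, DifferentiableAt ℝ f y := fun y hy =>
    (hf.contDiffAt (hU.mem_nhds hy)).differentiableAt (by simp)
  -- the contact set
  set Γ : Set (EuclideanSpace ℝ (Fin n)) :=
    {x | x ∈ K ∧ ‖gradient u x‖ ≤ 1 ∧
      ∀ w : EuclideanSpace ℝ (Fin n), 0 ≤ (inner ℝ (fderiv ℝ (gradient u) x w) w : ℝ)} with hΓdef
  have hΓsub : Γ ⊆ K := fun x hx => hx.1
  have hΓclosed : IsClosed Γ := by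
    apply IsSeqClosed.isClosed
    intro xs x hxs hlim
    have hxK : x ∈ K := (isCompact_closedBall (0 : EuclideanSpace ℝ (Fin n)) 1).isClosed.mem_of_tendsto
      hlim (Filter.Eventually.of_forall fun k => (hxs k).1)
    have hxV : x ∈ V := hBV hxK
    refine ⟨hxK, ?_, ?_⟩
    · have hc : ContinuousAt (gradient u) x :=
        (hgC1.continuousOn.continuousAt (hV.mem_nhds hxV))
      have ht : Filter.Tendsto (fun k => ‖gradient u (xs k)‖) Filter.atTop
          (nhds ‖gradient u x‖) := ((hc.tendsto.comp hlim).norm)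
      exact le_of_tendsto ht (Filter.Eventually.of_forall fun k => (hxs k).2.1)
    · intro w
      have hc : ContinuousAt (fun y => fderiv ℝ (gradient u) y) x :=
        hHcont.continuousAt (hV.mem_nhds hxV)
      have h1 : Filter.Tendsto (fun k => fderiv ℝ (gradient u) (xs k)) Filter.atTop
          (nhds (fderiv ℝ (gradient u) x)) := hc.tendsto.comp hlim
      have h2 : Filter.Tendsto (fun k => fderiv ℝ (gradient u) (xs k) w) Filter.atTop
          (nhds (fderiv ℝ (gradient u) x w)) :=
        ((ContinuousLinearMap.apply ℝ (EuclideanSpace ℝ (Fin n)) w).continuous.tendsto _).comp h1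
      have h3 : Filter.Tendsto
          (fun k => (inner ℝ (fderiv ℝ (gradient u) (xs k) w) w : ℝ)) Filter.atTop
          (nhds (inner ℝ (fderiv ℝ (gradient u) x w) w : ℝ)) :=
        h2.inner tendsto_const_nhds
      exact ge_of_tendsto h3 (Filter.Eventually.of_forall fun k => (hxs k).2.2 w)
  have hΓmeas : MeasurableSet Γ := hΓclosed.measurableSet
  -- covering
  have hcov : B ⊆ (gradient u) '' Γ := by
    intro q hq
    obtain ⟨x, hxball, hgx, hpsd⟩ := exists_contact_point hV hBV hu hneumann hq
    refine ⟨x, ⟨ball_subset_closedBall hxball, ?_, hpsd⟩, hgx⟩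
    rw [hgx]
    exact le_of_lt (mem_ball_zero_iff.mp hq)
  -- jacobian bound
  have hfd' : ∀ x ∈ Γ, HasFDerivWithinAt (gradient u) (fderiv ℝ (gradient u) x) Γ x :=
    fun x hx => ((hgd x (hBV (hΓsub hx))).hasFDerivAt).hasFDerivWithinAt
  have h1 : volume B ≤ ∫⁻ x in Γ, ENNReal.ofReal |(fderiv ℝ (gradient u) x).det| := by
    calc volume B ≤ volume ((gradient u) '' Γ) := measure_mono hcov
      _ ≤ ∫⁻ x in Γ, ENNReal.ofReal |(fderiv ℝ (gradient u) x).det| :=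
        MeasureTheory.addHaar_image_le_lintegral_abs_det_fderiv volume hΓmeas hfd'
  -- pointwise bound on the contact set
  have hpoint : ∀ x ∈ Γ, ENNReal.ofReal |(fderiv ℝ (gradient u) x).det| ≤
      ENNReal.ofReal (f x ^ p) := by
    intro x hx
    obtain ⟨hxK, hgle, hpsd⟩ := hx
    have hxV : x ∈ V := hBV hxK
    have hxU : x ∈ U := hBU hxK
    have hapos : 0 < f x := hfpos x hxU
    have hsym := fun v w => hessian_symm hV hu hxV v w
    have hApsd := hessianMatrix_posSemidef hsym hpsd
    have hA := hessianMatrix_trace_nonneg_det_le hApsd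
    set A : Matrix (Fin n) (Fin n) ℝ := hessianMatrix u x with hAdef
    set T : ℝ := A.trace with hTdef
    have hdiveq : divergence (fun y => f y • gradient u y) x =
        (inner ℝ (gradient f x) (gradient u x) : ℝ) + f x * T := by
      rw [divergence_smul_eq (hfd x hxU) (hgd x hxV), hTdef, hAdef, trace_hessianMatrix]
    have hPDE := hpde x hxK
    rw [hdiveq] at hPDE
    have hib : -‖gradient f x‖ ≤ (inner ℝ (gradient f x) (gradient u x) : ℝ) := by
      have h1' := abs_real_inner_le_norm (gradient f x) (gradient u x)
      have h2' : ‖gradient f x‖ * ‖gradient u x‖ ≤ ‖gradient f x‖ * 1 :=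
        mul_le_mul_of_nonneg_left hgle (norm_nonneg _)
      have h3' := abs_le.mp h1'
      nlinarith [h3'.1]
    have hfT : f x * T ≤ (n : ℝ) * f x ^ p := by linarith [norm_nonneg (gradient f x)]
    have hppow : f x ^ (p - 1) * f x = f x ^ p := by
      have h := (Real.rpow_add hapos (p - 1) 1).symm
      rw [Real.rpow_one] at h
      rw [h]
      norm_num
    have hT1 : T ≤ (n : ℝ) * f x ^ (p - 1) := by
      have hstep : T * f x ≤ ((n : ℝ) * f x ^ (p - 1)) * f x := by
        rw [mul_assoc, hppow]; linarith
      exact le_of_mul_le_mul_right hstep hapos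
    have hdet1 : A.det ≤ (T / n) ^ n := psd_det_le_pow_trace hn0 hApsd
    have hTn : T / n ≤ f x ^ (p - 1) := by
      rw [div_le_iff₀ hnpos]
      calc T ≤ (n : ℝ) * f x ^ (p - 1) := hT1
        _ = f x ^ (p - 1) * n := by ring
    have hdet2 : (T / n) ^ n ≤ (f x ^ (p - 1)) ^ n :=
      pow_le_pow_left₀ (div_nonneg hA.1 hnpos.le) hTn n
    have hpexp : (p - 1) * (n : ℝ) = p := by
      have hkey : p * ((n : ℝ) - 1) = n := by rw [hpdef]; field_simp
      linear_combination hkey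
    have hpow : (f x ^ (p - 1)) ^ n = f x ^ p := by
      rw [← Real.rpow_natCast (f x ^ (p - 1)) n, ← Real.rpow_mul hapos.le, hpexp]
    have hdetfinal : |(fderiv ℝ (gradient u) x).det| ≤ f x ^ p := by
      rw [← hessianMatrix_det u x, ← hAdef, abs_of_nonneg hA.2]
      calc A.det ≤ (T / n) ^ n := hdet1
        _ ≤ (f x ^ (p - 1)) ^ n := hdet2
        _ = f x ^ p := hpow
    exact ENNReal.ofReal_le_ofReal hdetfinal
  have h2 : (∫⁻ x in Γ, ENNReal.ofReal |(fderiv ℝ (gradient u) x).det|) ≤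
      ∫⁻ x in Γ, ENNReal.ofReal (f x ^ p) :=
    MeasureTheory.lintegral_mono_ae ((MeasureTheory.ae_restrict_iff' hΓmeas).mpr
      (MeasureTheory.ae_of_all _ hpoint))
  have h3 : (∫⁻ x in Γ, ENNReal.ofReal (f x ^ p)) ≤ ∫⁻ x in K, ENNReal.ofReal (f x ^ p) :=
    MeasureTheory.lintegral_mono_set hΓsub
  have hsphere : volume (sphere (0 : EuclideanSpace ℝ (Fin n)) 1) = 0 :=
    MeasureTheory.Measure.addHaar_sphere volume 0 1
  have h4 : (∫⁻ x in K, ENNReal.ofReal (f x ^ p)) ≤ ∫⁻ x in B, ENNReal.ofReal (f x ^ p) := by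
    rw [hKdef, ← ball_union_sphere]
    refine le_trans (MeasureTheory.lintegral_union_le _ _ _) ?_
    have h0 : (∫⁻ x in sphere (0 : EuclideanSpace ℝ (Fin n)) 1, ENNReal.ofReal (f x ^ p)) = 0 := by
      rw [MeasureTheory.Measure.restrict_eq_zero.mpr hsphere]
      simp
    rw [h0, add_zero]
  have hfpC : ContinuousOn (fun x => f x ^ p) K := by
    apply ContinuousOn.rpow_const (hf.continuousOn.mono hBU)
    intro x hxK
    exact Or.inl (ne_of_gt (hfpos x (hBU hxK)))
  have hint : MeasureTheory.IntegrableOn (fun x => f x ^ p) B volume :=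
    (hfpC.integrableOn_compact (isCompact_closedBall _ _)).mono_set ball_subset_closedBall
  have hnn : 0 ≤ᵐ[volume.restrict B] fun x => f x ^ p :=
    (MeasureTheory.ae_restrict_iff' measurableSet_ball).mpr (MeasureTheory.ae_of_all _
      fun x hx => Real.rpow_nonneg (hfpos x (hBU (ball_subset_closedBall hx))).le p)
  have h5 : (∫⁻ x in B, ENNReal.ofReal (f x ^ p)) = ENNReal.ofReal (∫ x in B, f x ^ p) :=
    (MeasureTheory.ofReal_integral_eq_lintegral_ofReal hint hnn).symm
  have hchain := le_trans h1 (le_trans h2 (le_trans h3 h4))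
  rw [h5] at hchain
  have hInn : 0 ≤ ∫ x in B, f x ^ p := MeasureTheory.setIntegral_nonneg measurableSet_ball
    fun x hx => Real.rpow_nonneg (hfpos x (hBU (ball_subset_closedBall hx))).le p
  exact ENNReal.toReal_le_of_le_ofReal hInn hchain
end
end

section
/- Let n ≥ 1. For each positive integer j, define c_j = ∫_{B̄₁^{n+1}} (max{1 − |ξ|², 1/j})^{-1/2} dξ, define ρ_j : [0,∞) → (0,∞) by ρ_j(s) = (c_j·√(max{1−s, 1/j}))^{-1}, and define α_j = sup_{z ∈ [0,1)} ∫_{-√(1−z²)}^{√(1−z²)} ρ_j(z² + y²) dy. Then α_j ≤ π/c_j for every j, and consequently limsup_{j→∞} α_j ≤ 1/|B₁ⁿ|, where |B₁ⁿ| is the Lebesgue measure of the open unit ball in ℝⁿ. -/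
open MeasureTheory Metric Set Filter
open scoped ENNReal NNReal Topology

noncomputable section

namespace AlphaJBound

lemma cont_integrand (r ε : ℝ) (hε : 0 < ε) :
    Continuous (fun y : ℝ => (Real.sqrt (max (r^2 - y^2) ε))⁻¹) := by
  apply Continuous.inv₀
  · exact (continuous_const.sub (continuous_pow 2)).max continuous_const |>.sqrt
  · intro y
    exact (Real.sqrt_pos.2 (lt_max_of_lt_right hε)).ne'

lemma int_eq_of_ge (r ε : ℝ) (hε : 0 < ε) (hge : r^2 ≤ ε) :
    ∫ y in -r..r, (Real.sqrt (max (r^2 - y^2) ε))⁻¹ = 2*r*(Real.sqrt ε)⁻¹ := by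
  have : ∀ y : ℝ, max (r^2 - y^2) ε = ε := by
    intro y
    exact max_eq_right (by nlinarith [sq_nonneg y])
  simp only [this]
  rw [intervalIntegral.integral_const]
  rw [smul_eq_mul]; ring

lemma middle_deriv (r : ℝ) (hr : 0 < r) (y : ℝ) (hy : |y| < r) :
    HasDerivAt (fun t : ℝ => Real.arcsin (t / r)) ((Real.sqrt (r^2 - y^2))⁻¹) y := by
  have hyr := abs_lt.1 hy
  have h1 : y / r ≠ -1 := by
    intro h
    have := (div_eq_iff hr.ne').1 h
    linarith [this]
  have h2 : y / r ≠ 1 := by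
    intro h
    have := (div_eq_iff hr.ne').1 h
    linarith [this]
  have := (Real.hasDerivAt_arcsin h1 h2).comp y ((hasDerivAt_id y).div_const r)
  refine this.congr_deriv ?_
  have hy2 : y^2 < r^2 := by nlinarith
  have hpos : 0 < r^2 - y^2 := by linarith
  have hs : Real.sqrt (1 - (y/r)^2) = Real.sqrt (r^2 - y^2) / r := by
    rw [show (1 - (y/r)^2) = (r^2-y^2)/r^2 by field_simp,
      Real.sqrt_div hpos.le, Real.sqrt_sq hr.le]
  rw [hs]
  have hsp : Real.sqrt (r^2 - y^2) ≠ 0 := (Real.sqrt_pos.2 hpos).ne'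
  field_simp

lemma int_eq_of_lt (r ε : ℝ) (hε : 0 < ε) (hlt : ε < r^2) (hr : 0 < r) :
    ∫ y in -r..r, (Real.sqrt (max (r^2 - y^2) ε))⁻¹ =
      2 * Real.arcsin (Real.sqrt (r^2 - ε) / r)
        + 2*(r - Real.sqrt (r^2 - ε)) * (Real.sqrt ε)⁻¹ := by
  set s := Real.sqrt (r^2 - ε) with hs
  have hs2 : s^2 = r^2 - ε := Real.sq_sqrt (by linarith)
  have hs0 : 0 ≤ s := Real.sqrt_nonneg _
  have hsr : s < r := by
    nlinarith [hs2, hs0]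
  have hcont := cont_integrand r ε hε
  have hii : ∀ a b : ℝ, IntervalIntegrable
      (fun y : ℝ => (Real.sqrt (max (r^2 - y^2) ε))⁻¹) volume a b :=
    fun a b => hcont.intervalIntegrable a b
  have split : ∫ y in -r..r, (Real.sqrt (max (r^2 - y^2) ε))⁻¹ =
      (∫ y in -r..-s, (Real.sqrt (max (r^2 - y^2) ε))⁻¹)
      + (∫ y in -s..s, (Real.sqrt (max (r^2 - y^2) ε))⁻¹)
      + (∫ y in s..r, (Real.sqrt (max (r^2 - y^2) ε))⁻¹) := by
    rw [intervalIntegral.integral_add_adjacent_intervals (hii _ _) (hii _ _),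
      intervalIntegral.integral_add_adjacent_intervals (hii _ _) (hii _ _)]
  have tail1 : (∫ y in s..r, (Real.sqrt (max (r^2 - y^2) ε))⁻¹) = (r - s) * (Real.sqrt ε)⁻¹ := by
    rw [intervalIntegral.integral_congr (g := fun _ => (Real.sqrt ε)⁻¹) ?_,
      intervalIntegral.integral_const, smul_eq_mul]
    intro y hy
    rw [Set.uIcc_of_le hsr.le] at hy
    have : max (r^2 - y^2) ε = ε := max_eq_right (by nlinarith [hy.1, hy.2])
    simp only [this]
  have tail2 : (∫ y in -r..-s, (Real.sqrt (max (r^2 - y^2) ε))⁻¹)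
      = (r - s) * (Real.sqrt ε)⁻¹ := by
    rw [intervalIntegral.integral_congr (g := fun _ => (Real.sqrt ε)⁻¹) ?_,
      intervalIntegral.integral_const, smul_eq_mul]
    · ring
    intro y hy
    rw [Set.uIcc_of_le (by linarith : -r ≤ -s)] at hy
    have : max (r^2 - y^2) ε = ε := max_eq_right (by nlinarith [hy.1, hy.2])
    simp only [this]
  have mid : (∫ y in -s..s, (Real.sqrt (max (r^2 - y^2) ε))⁻¹)
      = 2 * Real.arcsin (s / r) := by
    have congr1 : (∫ y in -s..s, (Real.sqrt (max (r^2 - y^2) ε))⁻¹)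
        = ∫ y in -s..s, (Real.sqrt (r^2 - y^2))⁻¹ := by
      apply intervalIntegral.integral_congr
      intro y hy
      rw [Set.uIcc_of_le (by linarith : -s ≤ s)] at hy
      have : max (r^2 - y^2) ε = r^2 - y^2 := max_eq_left (by nlinarith [hy.1, hy.2])
      simp only [this]
    rw [congr1]
    have hderiv : ∀ y ∈ Set.uIcc (-s) s,
        HasDerivAt (fun t : ℝ => Real.arcsin (t / r)) ((Real.sqrt (r^2 - y^2))⁻¹) y := by
      intro y hy
      rw [Set.uIcc_of_le (by linarith : -s ≤ s)] at hy
      exact middle_deriv r hr y (by rw [abs_lt]; constructor <;> [linarith [hy.1]; linarith [hy.2]])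
    have hint : IntervalIntegrable (fun y => (Real.sqrt (r^2 - y^2))⁻¹) volume (-s) s := by
      apply ContinuousOn.intervalIntegrable
      apply ContinuousOn.inv₀
      · exact ((continuous_const.sub (continuous_pow 2)).sqrt).continuousOn
      · intro y hy
        rw [Set.uIcc_of_le (by linarith : -s ≤ s)] at hy
        refine (Real.sqrt_pos.2 ?_).ne'
        nlinarith [hy.1, hy.2]
    rw [intervalIntegral.integral_eq_sub_of_hasDerivAt hderiv hint]
    rw [neg_div, Real.arcsin_neg]
    ring
  rw [split, tail1, tail2, mid]; ring

lemma arcsin_aux (r ε : ℝ) (hε : 0 < ε) (hlt : ε < r^2) (hr : 0 < r) :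
    Real.arcsin (Real.sqrt (r^2 - ε) / r) = Real.pi/2 - Real.arcsin (Real.sqrt ε / r) := by
  set t := Real.sqrt ε / r with ht
  have ht0 : 0 ≤ t := div_nonneg (Real.sqrt_nonneg _) hr.le
  have ht1 : t ≤ 1 := by
    rw [ht, div_le_one hr]
    calc Real.sqrt ε ≤ Real.sqrt (r^2) := Real.sqrt_le_sqrt hlt.le
    _ = r := Real.sqrt_sq hr.le
  have key : Real.sqrt (r^2 - ε) / r = Real.sqrt (1 - t^2) := by
    rw [ht, div_pow, Real.sq_sqrt hε.le,
      show (1 - ε / r^2) = (r^2 - ε)/r^2 by field_simp,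
      Real.sqrt_div (by linarith), Real.sqrt_sq hr.le]
  rw [key]
  have θmem : Real.pi/2 - Real.arcsin t ∈ Set.Icc (-(Real.pi/2)) (Real.pi/2) := by
    constructor
    · have := Real.arcsin_le_pi_div_two t; linarith [Real.pi_pos]
    · have := Real.arcsin_nonneg.2 ht0; linarith
  have : Real.sin (Real.pi/2 - Real.arcsin t) = Real.sqrt (1 - t^2) := by
    rw [Real.sin_pi_div_two_sub, Real.cos_arcsin]
  rw [← this, Real.arcsin_sin θmem.1 θmem.2]

lemma int_le_pi (r ε : ℝ) (hr : 0 ≤ r) (hε : 0 < ε) :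
    ∫ y in -r..r, (Real.sqrt (max (r^2 - y^2) ε))⁻¹ ≤ Real.pi := by
  rcases le_or_gt (r^2) ε with hge | hlt
  · rw [int_eq_of_ge r ε hε hge]
    have h1 : r ≤ Real.sqrt ε := by
      rw [show r = Real.sqrt (r^2) by rw [Real.sqrt_sq hr]]
      exact Real.sqrt_le_sqrt hge
    have h2 : (0:ℝ) < Real.sqrt ε := Real.sqrt_pos.2 hε
    have : 2*r*(Real.sqrt ε)⁻¹ ≤ 2 := by
      rw [mul_inv_le_iff₀ h2]
      linarith
    linarith [Real.pi_gt_three]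
  · have hrpos : 0 < r := by nlinarith
    rw [int_eq_of_lt r ε hε hlt hrpos, arcsin_aux r ε hε hlt hrpos]
    set s := Real.sqrt (r^2 - ε) with hs
    have hs2 : s^2 = r^2 - ε := Real.sq_sqrt (by linarith)
    have hs0 : 0 ≤ s := Real.sqrt_nonneg _
    set t := Real.sqrt ε / r with ht
    have ht0 : 0 ≤ t := div_nonneg (Real.sqrt_nonneg _) hrpos.le
    have ht1 : t ≤ 1 := by
      rw [ht, div_le_one hrpos]
      calc Real.sqrt ε ≤ Real.sqrt (r^2) := Real.sqrt_le_sqrt hlt.le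
      _ = r := Real.sqrt_sq hrpos.le
    have hεs : (0:ℝ) < Real.sqrt ε := Real.sqrt_pos.2 hε
    have key : (r - s) * (Real.sqrt ε)⁻¹ ≤ t := by
      have hrs : 0 < r + s := by linarith
      have h1 : r - s = ε / (r + s) := by
        rw [eq_div_iff hrs.ne']
        nlinarith
      rw [h1, ht, div_mul_eq_mul_div, ← div_eq_mul_inv, Real.div_sqrt,
        div_le_div_iff₀ hrs hrpos]
      nlinarith [hεs]
    have harc : t ≤ Real.arcsin t := by
      have h0 : 0 ≤ Real.arcsin t := Real.arcsin_nonneg.2 ht0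
      calc t = Real.sin (Real.arcsin t) := (Real.sin_arcsin (by linarith) ht1).symm
      _ ≤ Real.arcsin t := Real.sin_le h0
    linarith

lemma int_tendsto (r : ℝ) (hr : 0 < r) :
    Tendsto (fun j : ℕ => ∫ y in -r..r, (Real.sqrt (max (r^2 - y^2) (1/(j:ℝ))))⁻¹)
      atTop (𝓝 Real.pi) := by
  set ψ : ℝ → ℝ := fun ε => 2 * Real.arcsin (Real.sqrt (r^2 - ε) / r)
      + 2 * Real.sqrt ε / (r + Real.sqrt (r^2 - ε)) with hψ
  have hψ0 : ψ 0 = Real.pi := by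
    simp only [hψ, sub_zero, Real.sqrt_sq hr.le, div_self hr.ne', Real.arcsin_one,
      Real.sqrt_zero, mul_zero, zero_div]
    ring
  have hψcont : ContinuousAt ψ 0 := by
    apply ContinuousAt.add
    · apply ContinuousAt.mul continuousAt_const
      apply Real.continuous_arcsin.continuousAt.comp
      exact (((continuousAt_const.sub continuousAt_id).sqrt).div continuousAt_const hr.ne')
    · apply ContinuousAt.div
      · exact continuousAt_const.mul (Real.continuous_sqrt.continuousAt)
      · exact continuousAt_const.add ((continuousAt_const.sub continuousAt_id).sqrt)
      · simp only [sub_zero, Real.sqrt_sq hr.le]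
        positivity
  have h1 : Tendsto (fun j : ℕ => ψ (1/(j:ℝ))) atTop (𝓝 Real.pi) := by
    rw [← hψ0]
    exact hψcont.tendsto.comp tendsto_one_div_atTop_nhds_zero_nat
  apply h1.congr'
  have hev : ∀ᶠ j : ℕ in atTop, 0 < 1/(j:ℝ) ∧ 1/(j:ℝ) < r^2 := by
    filter_upwards [eventually_ge_atTop 1,
      tendsto_one_div_atTop_nhds_zero_nat.eventually (gt_mem_nhds (by positivity : (0:ℝ) < r^2))]
      with j hj1 hj2
    exact ⟨by positivity, hj2⟩
  filter_upwards [hev] with j ⟨hj0, hjr⟩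
  rw [int_eq_of_lt r _ hj0 hjr hr]
  set ε := 1/(j:ℝ)
  set s := Real.sqrt (r^2 - ε) with hs
  have hs2 : s^2 = r^2 - ε := Real.sq_sqrt (by linarith)
  have hs0 : 0 ≤ s := Real.sqrt_nonneg _
  have hrs : 0 < r + s := by linarith
  have h2 : (r - s) * (Real.sqrt ε)⁻¹ = Real.sqrt ε / (r + s) := by
    have h1 : r - s = ε / (r + s) := by
      rw [eq_div_iff hrs.ne']
      nlinarith
    rw [h1, div_mul_eq_mul_div, ← div_eq_mul_inv, Real.div_sqrt]
  rw [hψ]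
  simp only
  rw [mul_assoc, h2]
  ring

lemma fcont (m : ℕ) (ε : ℝ) (hε : 0 < ε) :
    Continuous (fun ξ : EuclideanSpace ℝ (Fin m) => (Real.sqrt (max (1 - ‖ξ‖^2) ε))⁻¹) := by
  apply Continuous.inv₀
  · exact ((continuous_const.sub ((continuous_norm).pow 2)).max continuous_const).sqrt
  · intro ξ
    exact (Real.sqrt_pos.2 (lt_max_of_lt_right hε)).ne'

lemma c_rewrite (m j : ℕ) (hj : 1 ≤ j) :
    (∫ ξ in closedBall (0 : EuclideanSpace ℝ (Fin m)) 1,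
        (max (1 - ‖ξ‖ ^ 2) (1 / (j : ℝ))) ^ (-(1:ℝ)/2))
      = ∫ ξ in closedBall (0 : EuclideanSpace ℝ (Fin m)) 1,
        (Real.sqrt (max (1 - ‖ξ‖^2) (1/(j:ℝ))))⁻¹ := by
  have hjpos : (0:ℝ) < (j:ℝ) := by exact_mod_cast hj
  have hε : (0:ℝ) < 1/(j:ℝ) := by positivity
  have h : ∀ ξ : EuclideanSpace ℝ (Fin m),
      (max (1 - ‖ξ‖ ^ 2) (1 / (j : ℝ))) ^ (-(1:ℝ)/2)
        = (Real.sqrt (max (1 - ‖ξ‖^2) (1/(j:ℝ))))⁻¹ := by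
    intro ξ
    have hx : (0:ℝ) < max (1 - ‖ξ‖^2) (1/(j:ℝ)) := lt_max_of_lt_right hε
    rw [neg_div, Real.rpow_neg hx.le, Real.sqrt_eq_rpow]
  simp only [h]

lemma c_pos (m j : ℕ) (hj : 1 ≤ j) :
    0 < ∫ ξ in closedBall (0 : EuclideanSpace ℝ (Fin m)) 1,
        (Real.sqrt (max (1 - ‖ξ‖^2) (1/(j:ℝ))))⁻¹ := by
  have hjpos : (0:ℝ) < (j:ℝ) := by exact_mod_cast hj
  have hε : (0:ℝ) < 1/(j:ℝ) := by positivity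
  have hε1 : 1/(j:ℝ) ≤ 1 := by
    rw [div_le_one hjpos]; exact_mod_cast hj
  have hone : ∀ ξ ∈ closedBall (0 : EuclideanSpace ℝ (Fin m)) 1,
      (1:ℝ) ≤ (Real.sqrt (max (1 - ‖ξ‖^2) (1/(j:ℝ))))⁻¹ := by
    intro ξ _
    have h1 : max (1 - ‖ξ‖^2) (1/(j:ℝ)) ≤ 1 :=
      max_le (by nlinarith [sq_nonneg ‖ξ‖]) hε1
    have h2 : (0:ℝ) < max (1 - ‖ξ‖^2) (1/(j:ℝ)) := lt_max_of_lt_right hε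
    have h3 : Real.sqrt (max (1 - ‖ξ‖^2) (1/(j:ℝ))) ≤ 1 :=
      Real.sqrt_le_one.2 h1
    have h4 : (0:ℝ) < Real.sqrt (max (1 - ‖ξ‖^2) (1/(j:ℝ))) := Real.sqrt_pos.2 h2
    exact (one_le_inv₀ h4).2 h3
  have hvol : 0 < (volume (closedBall (0 : EuclideanSpace ℝ (Fin m)) 1)).toReal := by
    refine ENNReal.toReal_pos ?_ measure_closedBall_lt_top.ne
    exact (lt_of_lt_of_le (measure_ball_pos volume 0 one_pos)
      (measure_mono ball_subset_closedBall)).ne'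
  calc (0:ℝ) < (volume (closedBall (0 : EuclideanSpace ℝ (Fin m)) 1)).toReal := hvol
  _ = ∫ _ in closedBall (0 : EuclideanSpace ℝ (Fin m)) 1, (1:ℝ) := by
      rw [setIntegral_const, smul_eq_mul, mul_one]; rfl
  _ ≤ _ := by
      refine setIntegral_mono_on ?_ ?_ measurableSet_closedBall hone
      · exact integrableOn_const measure_closedBall_lt_top.ne
      · exact ((fcont m _ hε).continuousOn).integrableOn_compact (isCompact_closedBall _ _)

lemma c_tendsto (n : ℕ) :
    Tendsto (fun j : ℕ => ∫ ξ in closedBall (0 : EuclideanSpace ℝ (Fin (n+1))) 1,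
        (Real.sqrt (max (1 - ‖ξ‖^2) (1/((j+1:ℕ):ℝ))))⁻¹) atTop
      (𝓝 (Real.pi * (volume (ball (0 : EuclideanSpace ℝ (Fin n)) 1)).toReal)) := by
  classical
  set A : (Fin n → ℝ) → ℝ := fun x => ∑ i, (x i)^2 with hA
  have hAcont : Continuous A := by
    apply continuous_finset_sum
    intro i _
    exact (continuous_apply i).pow 2
  set Φ : (ℝ × (Fin n → ℝ)) ≃ᵐ EuclideanSpace ℝ (Fin (n+1)) :=
    (MeasurableEquiv.piFinSuccAbove (fun _ : Fin (n+1) => ℝ) 0).symm.trans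
      (MeasurableEquiv.toLp 2 (Fin (n+1) → ℝ)) with hΦ
  have hΦmp : MeasurePreserving Φ volume volume := by
    have h1 := (volume_preserving_piFinSuccAbove (fun _ : Fin (n+1) => ℝ) 0).symm
    have h2 := (EuclideanSpace.volume_preserving_symm_measurableEquiv_toLp (Fin (n+1))).symm
    exact h2.comp h1
  have hnorm : ∀ p : ℝ × (Fin n → ℝ), ‖Φ p‖^2 = p.1^2 + A p.2 := by
    intro p
    have h1 : ∀ i, (Φ p) i = Fin.insertNth (α := fun _ => ℝ) 0 p.1 p.2 i := by
      intro i
      simp [hΦ, MeasurableEquiv.piFinSuccAbove_symm_apply, Fin.insertNthEquiv,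
        MeasurableEquiv.coe_toLp]
    rw [EuclideanSpace.norm_eq, Real.sq_sqrt (by positivity)]
    rw [show ∑ i, ‖(Φ p) i‖^2 = ∑ i, (Fin.insertNth (α := fun _ => ℝ) 0 p.1 p.2 i)^2 by
      simp [h1, Real.norm_eq_abs, sq_abs]]
    rw [Fin.sum_univ_succAbove (fun i => (Fin.insertNth (α := fun _ => ℝ) 0 p.1 p.2 i)^2) 0]
    simp [hA]
  -- notation
  set ε : ℕ → ℝ := fun j => 1/((j+1:ℕ):ℝ) with hε
  have hεpos : ∀ j, 0 < ε j := by
    intro j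
    have : (0:ℝ) < ((j+1:ℕ):ℝ) := by positivity
    positivity
  set f : ℕ → EuclideanSpace ℝ (Fin (n+1)) → ℝ :=
    fun j ξ => (Real.sqrt (max (1 - ‖ξ‖^2) (ε j)))⁻¹ with hf
  set H : ℕ → ℝ × (Fin n → ℝ) → ℝ :=
    fun j p => (closedBall (0 : EuclideanSpace ℝ (Fin (n+1))) 1).indicator (f j) (Φ p) with hH
  have hHint : ∀ j, Integrable (H j) (volume.prod volume) := by
    intro j
    have : Integrable (fun p : ℝ × (Fin n → ℝ) =>
        (closedBall (0 : EuclideanSpace ℝ (Fin (n+1))) 1).indicator (f j) (Φ p)) volume := by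
      rw [show (fun p : ℝ × (Fin n → ℝ) =>
          (closedBall (0 : EuclideanSpace ℝ (Fin (n+1))) 1).indicator (f j) (Φ p))
        = ((closedBall (0 : EuclideanSpace ℝ (Fin (n+1))) 1).indicator (f j)) ∘ ⇑Φ from rfl,
        hΦmp.integrable_comp_emb Φ.measurableEmbedding]
      have h1 : IntegrableOn (f j) (closedBall (0 : EuclideanSpace ℝ (Fin (n+1))) 1) volume :=
        ((fcont (n+1) (ε j) (hεpos j)).continuousOn).integrableOn_compact (isCompact_closedBall _ _)
      exact h1.integrable_indicator measurableSet_closedBall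
    rwa [← Measure.volume_eq_prod]
  set F : ℕ → (Fin n → ℝ) → ℝ := fun j x => ∫ y : ℝ, H j (y, x) with hF
  -- chain equality
  have hchain : ∀ j, (∫ ξ in closedBall (0 : EuclideanSpace ℝ (Fin (n+1))) 1, f j ξ)
      = ∫ x : Fin n → ℝ, F j x := by
    intro j
    rw [← integral_indicator measurableSet_closedBall]
    rw [← hΦmp.integral_comp' (fun ξ => (closedBall (0 : EuclideanSpace ℝ (Fin (n+1))) 1).indicator (f j) ξ)]
    have h1 : (∫ p : ℝ × (Fin n → ℝ), H j p) = ∫ p, H j p ∂(volume.prod volume) := by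
      rw [← Measure.volume_eq_prod]
    rw [show (∫ p : ℝ × (Fin n → ℝ),
        (closedBall (0 : EuclideanSpace ℝ (Fin (n+1))) 1).indicator (f j) (Φ p)) = ∫ p, H j p from rfl,
      h1, integral_prod _ (hHint j)]
    exact integral_integral_swap (f := fun y x => H j (y, x)) (hHint j)
  -- evaluation of the inner integral
  have hFval : ∀ j x, A x ≤ 1 → F j x =
      ∫ y in -(Real.sqrt (1 - A x))..(Real.sqrt (1 - A x)),
        (Real.sqrt (max ((Real.sqrt (1 - A x))^2 - y^2) (ε j)))⁻¹ := by
    intro j x ha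
    set r := Real.sqrt (1 - A x) with hrdef
    have hr0 : 0 ≤ r := Real.sqrt_nonneg _
    have hr2 : r^2 = 1 - A x := Real.sq_sqrt (by linarith)
    have hpt : ∀ y : ℝ, H j (y, x)
        = (Icc (-r) r).indicator (fun y => (Real.sqrt (max (r^2 - y^2) (ε j)))⁻¹) y := by
      intro y
      have hn2 := hnorm (y, x)
      have hmem : Φ (y, x) ∈ closedBall (0 : EuclideanSpace ℝ (Fin (n+1))) 1
          ↔ y ∈ Icc (-r) r := by
        rw [mem_closedBall_zero_iff, mem_Icc]
        constructor
        · intro h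
          have h2 : ‖Φ (y, x)‖^2 ≤ 1 := by nlinarith [norm_nonneg (Φ (y, x))]
          have h3 : y^2 ≤ r^2 := by rw [hr2]; linarith [hn2 ▸ h2]
          have h4 : |y| ≤ r := by
            rw [← Real.sqrt_sq_eq_abs, ← Real.sqrt_sq hr0]
            exact Real.sqrt_le_sqrt h3
          exact abs_le.1 h4
        · intro h
          have h3 : y^2 ≤ r^2 := sq_le_sq' h.1 h.2
          have h2 : ‖Φ (y, x)‖^2 ≤ 1 := by rw [hn2]; nlinarith
          nlinarith [norm_nonneg (Φ (y, x))]
      by_cases hy : y ∈ Icc (-r) r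
      · rw [hH]
        simp only
        rw [indicator_of_mem (hmem.2 hy), indicator_of_mem hy, hf]
        simp only
        rw [show (1 - ‖Φ (y, x)‖^2) = r^2 - y^2 by rw [hn2, hr2]; ring]
      · rw [hH]
        simp only
        rw [indicator_of_notMem (fun h => hy (hmem.1 h)), indicator_of_notMem hy]
    rw [hF]
    simp only [hpt]
    rw [integral_indicator measurableSet_Icc, integral_Icc_eq_integral_Ioc,
      intervalIntegral.integral_of_le (by linarith : -r ≤ r)]
  have hFzero : ∀ j x, 1 < A x → F j x = 0 := by
    intro j x ha
    have hpt : ∀ y : ℝ, H j (y, x) = 0 := by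
      intro y
      have hn2 := hnorm (y, x)
      rw [hH]
      simp only
      apply indicator_of_notMem
      intro h
      rw [mem_closedBall_zero_iff] at h
      have h2 : ‖Φ (y, x)‖^2 ≤ 1 := by nlinarith [norm_nonneg (Φ (y, x))]
      nlinarith [sq_nonneg y, hn2 ▸ h2]
    rw [hF]
    simp only [hpt, integral_zero]
  -- sets
  set S : Set (Fin n → ℝ) := {x | A x < 1} with hS
  have hSmeas : MeasurableSet S := (isOpen_lt hAcont continuous_const).measurableSet
  set Sc : Set (Fin n → ℝ) := {x | A x ≤ 1} with hSc
  have hScmeas : MeasurableSet Sc := (isClosed_le hAcont continuous_const).measurableSet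
  have hScvol : volume Sc < ⊤ := by
    have hsub : Sc ⊆ Set.pi univ (fun _ : Fin n => Icc (-1:ℝ) 1) := by
      intro x hx i _
      have h1 : (x i)^2 ≤ 1 := by
        have h2 := Finset.single_le_sum (f := fun i => (x i)^2)
          (fun i _ => sq_nonneg (x i)) (Finset.mem_univ i)
        exact le_trans h2 hx
      rw [mem_Icc]
      constructor
      · nlinarith [sq_nonneg (x i + 1)]
      · nlinarith [sq_nonneg (x i - 1)]
    calc volume Sc ≤ volume (Set.pi univ fun _ : Fin n => Icc (-1:ℝ) 1) := measure_mono hsub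
    _ = ∏ _i : Fin n, volume (Icc (-1:ℝ) 1) := volume_pi_pi _
    _ < ⊤ := by
        have h2 : volume (Icc (-1:ℝ) 1) = ENNReal.ofReal 2 := by
          rw [Real.volume_Icc]; norm_num
        rw [h2, Finset.prod_const, Finset.card_univ, Fintype.card_fin]
        exact ENNReal.pow_lt_top ENNReal.ofReal_lt_top
  set bound : (Fin n → ℝ) → ℝ := Sc.indicator (fun _ => Real.pi) with hbound_def
  have hbound_int : Integrable bound := by
    rw [hbound_def, integrable_indicator_iff hScmeas]
    exact integrableOn_const hScvol.ne
  have hFmeas : ∀ j, AEStronglyMeasurable (F j) volume := fun j =>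
    ((hHint j).integral_prod_right).aestronglyMeasurable
  have hbound : ∀ j, ∀ᵐ x : Fin n → ℝ, ‖F j x‖ ≤ bound x := by
    intro j
    refine Eventually.of_forall (fun x => ?_)
    rcases le_or_gt (A x) 1 with ha | ha
    · rw [hFval j x ha]
      set r := Real.sqrt (1 - A x) with hrdef
      have h0 : 0 ≤ ∫ y in -r..r, (Real.sqrt (max (r^2 - y^2) (ε j)))⁻¹ :=
        intervalIntegral.integral_nonneg
          (by linarith [Real.sqrt_nonneg (1 - A x)]) (fun u _ => by positivity)
      rw [Real.norm_eq_abs, abs_of_nonneg h0]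
      have hb : bound x = Real.pi := by
        rw [hbound_def, indicator_of_mem (show x ∈ Sc from ha)]
      rw [hb]
      exact int_le_pi r (ε j) (Real.sqrt_nonneg _) (hεpos j)
    · rw [hFzero j x ha, norm_zero]
      exact indicator_nonneg (fun _ _ => Real.pi_pos.le) x
  have hlim : ∀ᵐ x : Fin n → ℝ,
      Tendsto (fun j => F j x) atTop (𝓝 (S.indicator (fun _ => Real.pi) x)) := by
    refine Eventually.of_forall (fun x => ?_)
    rcases lt_trichotomy (A x) 1 with ha | ha | ha
    · have hr : 0 < Real.sqrt (1 - A x) := Real.sqrt_pos.2 (by linarith)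
      rw [indicator_of_mem (show x ∈ S from ha)]
      have h1 := (int_tendsto (Real.sqrt (1 - A x)) hr).comp (tendsto_add_atTop_nat 1)
      apply h1.congr
      intro j
      rw [hFval j x ha.le]
      simp only [Function.comp_apply]; rfl
    · rw [indicator_of_notMem (show x ∉ S by rw [hS]; simp [ha])]
      have hz : ∀ j, F j x = 0 := by
        intro j
        rw [hFval j x ha.le, show Real.sqrt (1 - A x) = 0 by rw [ha]; simp]
        simp
      simp only [hz]
      exact tendsto_const_nhds
    · rw [indicator_of_notMem (show x ∉ S by rw [hS]; simp; linarith)]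
      simp only [hFzero _ x ha]
      exact tendsto_const_nhds
  have hDCT := tendsto_integral_of_dominated_convergence bound hFmeas hbound_int hbound hlim
  have hlimval : (∫ x : Fin n → ℝ, S.indicator (fun _ => Real.pi) x)
      = Real.pi * (volume (ball (0 : EuclideanSpace ℝ (Fin n)) 1)).toReal := by
    rw [integral_indicator_const _ hSmeas, smul_eq_mul, mul_comm]
    rw [measureReal_def]
    congr 2
    have hmp := EuclideanSpace.volume_preserving_symm_measurableEquiv_toLp (Fin n)
    have hpre : (MeasurableEquiv.toLp 2 (Fin n → ℝ)).symm ⁻¹' S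
        = ball (0 : EuclideanSpace ℝ (Fin n)) 1 := by
      ext ξ
      simp only [mem_preimage, mem_ball_zero_iff, hS, mem_setOf_eq]
      rw [show A ((MeasurableEquiv.toLp 2 (Fin n → ℝ)).symm ξ) = ∑ i, (ξ i)^2 from by
        simp [hA, MeasurableEquiv.coe_toLp_symm]]
      rw [EuclideanSpace.norm_eq,
        show ∑ i, ‖ξ i‖^2 = ∑ i, (ξ i)^2 from by simp [Real.norm_eq_abs, sq_abs]]
      rw [show (1:ℝ) = 1^2 from (one_pow 2).symm, ← Real.sqrt_lt' one_pos]
      norm_num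
    rw [← hmp.measure_preimage hSmeas.nullMeasurableSet, hpre]
  rw [hlimval] at hDCT
  exact hDCT.congr (fun j => (hchain j).symm)

end AlphaJBound

open AlphaJBound

/-- With `c_j = ∫_{B̄₁^{n+1}} (max{1 − |ξ|², 1/j})^{-1/2} dξ`,
`ρ_j(s) = (c_j √(max{1−s, 1/j}))⁻¹` and
`α_j = sup_{z ∈ [0,1)} ∫_{-√(1-z²)}^{√(1-z²)} ρ_j(z² + y²) dy`, one has `α_j ≤ π / c_j` for every
`j ≥ 1` and `limsup_{j→∞} α_j ≤ 1/|B₁ⁿ|`. -/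
theorem alpha_j_bound (n : ℕ) (hn : 1 ≤ n)
    (c : ℕ → ℝ)
    (hc : ∀ j : ℕ, c j =
      ∫ ξ in closedBall (0 : EuclideanSpace ℝ (Fin (n + 1))) 1,
        (max (1 - ‖ξ‖ ^ 2) (1 / (j : ℝ))) ^ (-(1 : ℝ) / 2))
    (ρ : ℕ → ℝ → ℝ)
    (hρ : ∀ (j : ℕ) (s : ℝ), ρ j s = (c j * Real.sqrt (max (1 - s) (1 / (j : ℝ))))⁻¹)
    (α : ℕ → ℝ)
    (hα : ∀ j : ℕ, α j = ⨆ z ∈ Ico (0 : ℝ) 1,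
      ∫ y in -Real.sqrt (1 - z ^ 2)..Real.sqrt (1 - z ^ 2), ρ j (z ^ 2 + y ^ 2)) :
    (∀ j : ℕ, 1 ≤ j → α j ≤ Real.pi / c j) ∧
      Filter.limsup α atTop ≤
        1 / (volume (ball (0 : EuclideanSpace ℝ (Fin n)) 1)).toReal := by
  have hcform : ∀ j : ℕ, 1 ≤ j → c j =
      ∫ ξ in closedBall (0 : EuclideanSpace ℝ (Fin (n+1))) 1,
        (Real.sqrt (max (1 - ‖ξ‖^2) (1/(j:ℝ))))⁻¹ := by
    intro j hj
    rw [hc j, c_rewrite (n+1) j hj]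
  have hcpos : ∀ j : ℕ, 1 ≤ j → 0 < c j := by
    intro j hj
    rw [hcform j hj]
    exact c_pos (n+1) j hj
  have part1 : ∀ j : ℕ, 1 ≤ j → α j ≤ Real.pi / c j := by
    intro j hj
    have hcp := hcpos j hj
    have hjpos : (0:ℝ) < (j:ℝ) := by exact_mod_cast hj
    have hε : (0:ℝ) < 1/(j:ℝ) := by positivity
    have hd : (0:ℝ) ≤ Real.pi / c j := div_nonneg Real.pi_pos.le hcp.le
    rw [hα]
    refine Real.iSup_le (fun z => Real.iSup_le (fun hz => ?_) hd) hd
    obtain ⟨hz0, hz1⟩ := hz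
    have h1z : 0 < 1 - z^2 := by nlinarith
    set r := Real.sqrt (1 - z^2) with hrdef
    have hr2 : r^2 = 1 - z^2 := Real.sq_sqrt h1z.le
    have hrw : ∀ u : ℝ, ρ j (z^2 + u^2)
        = (c j)⁻¹ * (Real.sqrt (max (r^2 - u^2) (1/(j:ℝ))))⁻¹ := by
      intro u
      rw [hρ, show (1 - (z^2 + u^2)) = r^2 - u^2 by rw [hr2]; ring, mul_inv]
    simp only [hrw]
    rw [intervalIntegral.integral_const_mul]
    calc (c j)⁻¹ * ∫ y in -r..r, (Real.sqrt (max (r^2 - y^2) (1/(j:ℝ))))⁻¹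
        ≤ (c j)⁻¹ * Real.pi := by
          exact mul_le_mul_of_nonneg_left
            (int_le_pi r _ (Real.sqrt_nonneg _) hε) (inv_nonneg.2 hcp.le)
    _ = Real.pi / c j := by rw [inv_mul_eq_div]
  refine ⟨part1, ?_⟩
  set V := (volume (ball (0 : EuclideanSpace ℝ (Fin n)) 1)).toReal with hV
  have hVpos : 0 < V :=
    ENNReal.toReal_pos (measure_ball_pos volume 0 one_pos).ne' measure_ball_lt_top.ne
  have h2 : Tendsto (fun j : ℕ => c (j+1)) atTop (𝓝 (Real.pi * V)) := by
    apply (c_tendsto n).congr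
    intro j
    exact (hcform (j+1) (by omega)).symm
  have h3 : Tendsto c atTop (𝓝 (Real.pi * V)) := (tendsto_add_atTop_iff_nat 1).1 h2
  have h4 : Tendsto (fun j => Real.pi / c j) atTop (𝓝 (Real.pi / (Real.pi * V))) :=
    tendsto_const_nhds.div h3 (by positivity)
  have h5 : Real.pi / (Real.pi * V) = 1 / V := by
    rw [div_mul_eq_div_div]
    rw [div_self Real.pi_ne_zero]
  rw [h5] at h4
  have hle : α ≤ᶠ[atTop] fun j => Real.pi / c j := by
    filter_upwards [eventually_ge_atTop 1] with j hj
    exact part1 j hj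
  have hnn : ∀ᶠ j in atTop, (0:ℝ) ≤ α j := by
    filter_upwards [eventually_ge_atTop 1] with j hj
    rw [hα]
    refine Real.iSup_nonneg (fun z => Real.iSup_nonneg (fun hz => ?_))
    refine intervalIntegral.integral_nonneg
      (le_trans (neg_nonpos.2 (Real.sqrt_nonneg _)) (Real.sqrt_nonneg _)) (fun u _ => ?_)
    rw [hρ]
    exact inv_nonneg.2 (mul_nonneg (hcpos j hj).le (Real.sqrt_nonneg _))
  have hstep : limsup α atTop ≤ limsup (fun j => Real.pi / c j) atTop :=
    limsup_le_limsup hle (isCoboundedUnder_le_of_eventually_le atTop hnn)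
      h4.isBoundedUnder_le
  rw [h4.limsup_eq] at hstep
  exact hstep
end
end
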